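/- arXiv:1305.6369 — 5 statements merged into one kernel-verified Lean document; each statement's English description precedes it below -/
import Mathlib

section
/- Let p_1 = 2, p_2 = 3, ..., p_m denote the first m primes, set M_m = p_1 ⋯ p_m and R_m = (p_1 - 1) ⋯ (p_m - 1). Let H be an admissible set of natural numbers with cardinality k_0 ≥ 1, and let a be a natural number with a·R_m < k_0. Then the diameter of H is at least a·M_m; in particular, the diameter of H is at least M_m·(k_0/R_m - 1), i.e., (max H - min H)·R_m ≥ M_m·(k_0 - R_m). -/
/-! Reduce `H` modulo the primorial `M = p₁ ⋯ pₘ`. By the Chinese remainder theorem and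
admissibility, `H` meets at most `R = (p₁ - 1) ⋯ (pₘ - 1)` residue classes mod `M`. An interval
of length `a M` contains at most `a` elements of each residue class, so if the diameter of `H`
were smaller than `a M`, then `H` would have at most `a R` elements. -/

def IsAdmissible (H : Finset ℕ) : Prop :=
  ∀ p : ℕ, p.Prime → (H.image (fun n => n % p)).card < p

open Finset

theorem card_image_mod_mul_le (S : Finset ℕ) {M N : ℕ} (hMN : M.Coprime N) :
    #(S.image (· % (M * N))) ≤ #(S.image (· % M)) * #(S.image (· % N)) := by
  rw [← card_product]
  refine card_le_card_of_injOn (fun r => (r % M, r % N)) ?_ ?_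
  · rintro _ hr
    obtain ⟨n, hn, rfl⟩ := mem_image.mp hr
    exact mem_product.mpr
      ⟨mem_image.mpr ⟨n, hn, (Nat.mod_mod_of_dvd n (dvd_mul_right M N)).symm⟩,
        mem_image.mpr ⟨n, hn, (Nat.mod_mod_of_dvd n (dvd_mul_left N M)).symm⟩⟩
  · rintro _ hr _ hr' hrr
    obtain ⟨n, -, rfl⟩ := mem_image.mp hr
    obtain ⟨n', -, rfl⟩ := mem_image.mp hr'
    obtain ⟨hM, hN⟩ := Prod.mk.inj hrr
    have hMN : n % (M * N) ≡ n' % (M * N) [MOD M * N] :=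
      (Nat.modEq_and_modEq_iff_modEq_mul hMN).mp ⟨hM, hN⟩
    simpa only [Nat.ModEq, Nat.mod_mod] using hMN

theorem IsAdmissible.card_image_mod_prod_le {H : Finset ℕ} (hH : IsAdmissible H)
    {P : Finset ℕ} (hP : ∀ p ∈ P, p.Prime) :
    #(H.image (· % ∏ p ∈ P, p)) ≤ ∏ p ∈ P, (p - 1) := by
  induction P using Finset.induction_on with
  | empty => simpa only [prod_empty, Nat.mod_one] using card_le_one.mpr (by simp)
  | @insert p P hpP ih =>
    have hp : p.Prime := hP p (mem_insert_self p P)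
    have hPprime : ∀ q ∈ P, q.Prime := fun q hq => hP q (mem_insert_of_mem hq)
    have hcop : p.Coprime (∏ q ∈ P, q) := Nat.Coprime.prod_right fun q hq =>
      (Nat.coprime_primes hp (hPprime q hq)).mpr (ne_of_mem_of_not_mem hq hpP).symm
    rw [prod_insert hpP, prod_insert hpP]
    calc #(H.image (· % (p * ∏ q ∈ P, q)))
        ≤ #(H.image (· % p)) * #(H.image (· % ∏ q ∈ P, q)) := card_image_mod_mul_le H hcop
      _ ≤ (p - 1) * ∏ q ∈ P, (q - 1) :=
        Nat.mul_le_mul (Nat.le_sub_one_of_lt (hH p hp)) (ih hPprime)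

theorem card_le_mul_card_image_mod_of_subset_Ico {S : Finset ℕ} {a b M : ℕ}
    (hS : S ⊆ Ico b (b + a * M)) : #S ≤ a * #(S.image (· % M)) := by
  rw [← card_range a, ← card_product]
  refine card_le_card_of_injOn (fun n => ((n - b) / M, n % M)) ?_ ?_
  · intro n hn
    have hnIco := mem_Ico.mp (hS hn)
    exact mem_product.mpr
      ⟨mem_range.mpr (Nat.div_lt_of_lt_mul (by rw [mul_comm]; omega)), mem_image_of_mem _ hn⟩
  · intro n hn n' hn' hnn
    obtain ⟨hdiv, hmod⟩ := Prod.mk.inj hnn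
    have hb : b ≤ n := (mem_Ico.mp (hS hn)).1
    have hb' : b ≤ n' := (mem_Ico.mp (hS hn')).1
    have hmod' : n - b ≡ n' - b [MOD M] := by
      refine Nat.ModEq.add_left_cancel' b ?_
      rwa [Nat.add_sub_cancel' hb, Nat.add_sub_cancel' hb']
    have hshift : n - b = n' - b := calc
      n - b = M * ((n - b) / M) + (n - b) % M := (Nat.div_add_mod _ _).symm
      _ = M * ((n' - b) / M) + (n' - b) % M := by rw [show (n - b) / M = _ from hdiv, hmod']
      _ = n' - b := Nat.div_add_mod _ _
    omega

theorem IsAdmissible.card_le_of_diam_lt {H : Finset ℕ} (hH : IsAdmissible H) (hne : H.Nonempty)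
    {P : Finset ℕ} (hP : ∀ p ∈ P, p.Prime) {a : ℕ}
    (hD : H.max' hne - H.min' hne < a * ∏ p ∈ P, p) :
    #H ≤ a * ∏ p ∈ P, (p - 1) := by
  have hsub : H ⊆ Ico (H.min' hne) (H.min' hne + a * ∏ p ∈ P, p) := fun n hn => by
    have := H.min'_le n hn
    have := H.le_max' n hn
    exact mem_Ico.mpr ⟨by omega, by omega⟩
  calc #H ≤ a * #(H.image (· % ∏ p ∈ P, p)) := card_le_mul_card_image_mod_of_subset_Ico hsub
    _ ≤ a * ∏ p ∈ P, (p - 1) := Nat.mul_le_mul_left a (hH.card_image_mod_prod_le hP)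

theorem admissible_diameter_primorial_bound_general (H : Finset ℕ) (hne : H.Nonempty)
    (m k₀ : ℕ) (hcard : H.card = k₀) (hH : IsAdmissible H) :
    (∀ a : ℕ, a * (∏ i ∈ Finset.range m, (Nat.nth Nat.Prime i - 1)) < k₀ →
      a * (∏ i ∈ Finset.range m, Nat.nth Nat.Prime i) ≤ H.max' hne - H.min' hne) ∧
    (H.max' hne - H.min' hne) * (∏ i ∈ Finset.range m, (Nat.nth Nat.Prime i - 1)) ≥
      (∏ i ∈ Finset.range m, Nat.nth Nat.Prime i) *
        (k₀ - ∏ i ∈ Finset.range m, (Nat.nth Nat.Prime i - 1)) := by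
  set P := (range m).image (Nat.nth Nat.Prime)
  have hP : ∀ p ∈ P, p.Prime := by
    simp only [P, mem_image]
    rintro _ ⟨i, -, rfl⟩
    exact Nat.prime_nth_prime i
  have hinj : Set.InjOn (Nat.nth Nat.Prime) (range m) :=
    (Nat.nth_injective Nat.infinite_setOfPred_prime).injOn
  rw [← prod_image (f := fun p => p) hinj, ← prod_image (f := fun p => p - 1) hinj]
  set D := H.max' hne - H.min' hne
  set M := ∏ p ∈ P, p
  set R := ∏ p ∈ P, (p - 1)
  have key : ∀ a, D < a * M → k₀ ≤ a * R := fun a hD => hcard ▸ hH.card_le_of_diam_lt hne hP hD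
  refine ⟨fun a ha => not_lt.mp fun hD => (key a hD).not_gt ha, ?_⟩
  have hM : 0 < M := prod_pos fun p hp => (hP p hp).pos
  have hk₀ : k₀ - R ≤ D / M * R := by
    have := key (D / M + 1) (by rw [mul_comm]; exact Nat.lt_mul_div_succ D hM)
    rw [add_one_mul] at this
    omega
  calc M * (k₀ - R) ≤ M * (D / M) * R := by rw [mul_assoc]; exact Nat.mul_le_mul_left M hk₀
    _ ≤ D * R := Nat.mul_le_mul_right R (Nat.mul_div_le D M)

/-- `Nat.nth Nat.Prime i` for `i ∈ range m` runs over the first `m` primes. -/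
theorem admissible_diameter_primorial_bound (H : Finset ℕ) (hne : H.Nonempty)
    (m k₀ : ℕ) (hk₀ : 1 ≤ k₀) (hcard : H.card = k₀) (hH : IsAdmissible H) :
    (∀ a : ℕ, a * (∏ i ∈ Finset.range m, (Nat.nth Nat.Prime i - 1)) < k₀ →
      a * (∏ i ∈ Finset.range m, Nat.nth Nat.Prime i) ≤ H.max' hne - H.min' hne) ∧
    (H.max' hne - H.min' hne) * (∏ i ∈ Finset.range m, (Nat.nth Nat.Prime i - 1)) ≥
      (∏ i ∈ Finset.range m, Nat.nth Nat.Prime i) *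
        (k₀ - ∏ i ∈ Finset.range m, (Nat.nth Nat.Prime i - 1)) :=
  admissible_diameter_primorial_bound_general H hne m k₀ hcard hH
end

section
/- Every admissible set of natural numbers with cardinality 341,640 has diameter (maximum element minus minimum element) at least 1,751,112. -/
namespace Finset

theorem card_le_mul_card_image_mod {H : Finset ℕ} {m D : ℕ} (q : ℕ)
    (hH : ∀ n ∈ H, m ≤ n ∧ n ≤ m + D) :
    H.card ≤ (D / q + 1) * (H.image (· % q)).card := by
  have hcard := card_le_card_of_injOn (s := H) (t := range (D / q + 1) ×ˢ H.image (· % q))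
    (fun n => ((n - m) / q, n % q)) ?_ ?_
  · simpa only [card_product, card_range] using hcard
  · intro n hn
    have := hH n hn
    simp only [coe_product, coe_range, coe_image, Set.mem_prod, Set.mem_Iio]
    exact ⟨Nat.lt_succ_of_le (Nat.div_le_div_right (by omega)), Set.mem_image_of_mem _ hn⟩
  · intro a ha b hb hab
    obtain ⟨hdiv, hmod⟩ := Prod.mk.inj hab
    obtain ⟨hma, -⟩ := hH a ha
    obtain ⟨hmb, -⟩ := hH b hb
    have hsub_mod : (a - m) % q = (b - m) % q :=
      Nat.ModEq.add_right_cancel' m (by rwa [Nat.sub_add_cancel hma, Nat.sub_add_cancel hmb])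
    have hsub_eq : a - m = b - m := by
      rw [← Nat.div_add_mod (a - m) q, ← Nat.div_add_mod (b - m) q, hdiv, hsub_mod]
    omega

theorem card_image_mod_mul_le (H : Finset ℕ) {a b : ℕ} (hab : a.Coprime b) :
    (H.image (· % (a * b))).card ≤ (H.image (· % a)).card * (H.image (· % b)).card := by
  rw [← card_product]
  refine card_le_card_of_injOn (fun r => (r % a, r % b)) ?_ ?_
  · intro r hr
    obtain ⟨n, hn, rfl⟩ := mem_image.1 hr
    simp only [coe_product, coe_image, Set.mem_prod, Nat.mod_mul_right_mod, Nat.mod_mul_left_mod]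
    exact ⟨Set.mem_image_of_mem _ hn, Set.mem_image_of_mem _ hn⟩
  · intro r hr s hs hrs
    obtain ⟨n, -, rfl⟩ := mem_image.1 hr
    obtain ⟨k, -, rfl⟩ := mem_image.1 hs
    obtain ⟨ha, hb⟩ := Prod.mk.inj hrs
    simp only [Nat.mod_mul_right_mod, Nat.mod_mul_left_mod] at ha hb
    exact (Nat.modEq_and_modEq_iff_modEq_mul hab).1 ⟨ha, hb⟩

theorem card_image_mod_prod_primes_le (H : Finset ℕ) {s : Finset ℕ} (hs : ∀ p ∈ s, p.Prime) :
    (H.image (· % ∏ p ∈ s, p)).card ≤ ∏ p ∈ s, (H.image (· % p)).card := by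
  induction s using Finset.induction_on with
  | empty =>
    simp only [prod_empty, Nat.mod_one]
    exact card_le_one.2 fun _ ha _ hb => by simp_all
  | insert p t hpt ih =>
    have hp := hs p (mem_insert_self p t)
    have ht : ∀ q ∈ t, q.Prime := fun q hq => hs q (mem_insert_of_mem hq)
    have hcop : p.Coprime (∏ q ∈ t, q) := Nat.Coprime.prod_right fun q hq =>
      (Nat.coprime_primes hp (ht q hq)).2 fun h => hpt (h ▸ hq)
    rw [prod_insert hpt, prod_insert hpt]
    exact (card_image_mod_mul_le H hcop).trans (Nat.mul_le_mul_left _ (ih ht))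

end Finset

theorem IsAdmissible.card_image_mod_prod_primes_le {H : Finset ℕ} (hH : IsAdmissible H)
    {s : Finset ℕ} (hs : ∀ p ∈ s, p.Prime) :
    (H.image (· % ∏ p ∈ s, p)).card ≤ ∏ p ∈ s, (p - 1) :=
  (Finset.card_image_mod_prod_primes_le H hs).trans <|
    Finset.prod_le_prod' fun p hp => Nat.le_sub_one_of_lt (hH p (hs p hp))

theorem admissible_diameter_lower_bound_341640 (H : Finset ℕ) (hne : H.Nonempty)
    (hcard : H.card = 341640) (hH : IsAdmissible H) :
    1751112 ≤ H.max' hne - H.min' hne := by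
  by_contra! hlt
  have hspan : ∀ n ∈ H, H.min' hne ≤ n ∧ n ≤ H.min' hne + 1751111 := fun n hn =>
    ⟨H.min'_le n hn, by have := H.le_max' n hn; omega⟩
  have hres : (H.image (· % 30030)).card ≤ 5760 := by
    simpa using hH.card_image_mod_prod_primes_le (s := {2, 3, 5, 7, 11, 13}) (by norm_num)
  have := Finset.card_le_mul_card_image_mod 30030 hspan
  omega
end

section
/- Every admissible set of natural numbers with cardinality 1000 has diameter (maximum element minus minimum element) at least 4165. -/
theorem admissible_diameter_lower_bound_1000 (H : Finset ℕ) (hne : H.Nonempty)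
    (hcard : H.card = 1000) (hH : IsAdmissible H) :
    4165 ≤ H.max' hne - H.min' hne := by
  by_contra hlt
  push_neg at hlt
  have h2 := hH 2 (by norm_num)
  have h3 := hH 3 (by norm_num)
  have h5 := hH 5 (by norm_num)
  have h7 := hH 7 (by norm_num)
  set T : Finset ℕ := H.image (fun n => n % 210) with hT
  -- injectivity of the quadruple map on residues mod 210
  have hg : Set.InjOn (fun r => (r % 2, r % 3, r % 5, r % 7)) T := by
    intro r hr s hs h
    simp only [Prod.mk.injEq] at h
    obtain ⟨e2, e3, e5, e7⟩ := h
    have hr210 : r < 210 := by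
      simp only [hT, Finset.coe_image, Set.mem_image, Finset.mem_coe] at hr
      obtain ⟨n, _, rfl⟩ := hr
      exact Nat.mod_lt _ (by norm_num)
    have hs210 : s < 210 := by
      simp only [hT, Finset.coe_image, Set.mem_image, Finset.mem_coe] at hs
      obtain ⟨n, _, rfl⟩ := hs
      exact Nat.mod_lt _ (by norm_num)
    have h6 : r ≡ s [MOD 6] :=
      (Nat.modEq_and_modEq_iff_modEq_mul (by norm_num)).1 ⟨e2, e3⟩
    have h30 : r ≡ s [MOD 30] :=
      (Nat.modEq_and_modEq_iff_modEq_mul (by norm_num)).1 ⟨h6, e5⟩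
    have h210 : r ≡ s [MOD 210] :=
      (Nat.modEq_and_modEq_iff_modEq_mul (by norm_num)).1 ⟨h30, e7⟩
    rwa [Nat.ModEq, Nat.mod_eq_of_lt hr210, Nat.mod_eq_of_lt hs210] at h210
  have hTcard : T.card ≤ 48 := by
    have h1 : T.card = (T.image (fun r => (r % 2, r % 3, r % 5, r % 7))).card :=
      (Finset.card_image_of_injOn hg).symm
    have himg : T.image (fun r => (r % 2, r % 3, r % 5, r % 7)) =
        H.image (fun n => (n % 2, n % 3, n % 5, n % 7)) := by
      rw [hT, Finset.image_image]
      congr 1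
      funext n
      simp only [Function.comp_apply]
      rw [Nat.mod_mod_of_dvd n (by norm_num : (2:ℕ) ∣ 210),
        Nat.mod_mod_of_dvd n (by norm_num : (3:ℕ) ∣ 210),
        Nat.mod_mod_of_dvd n (by norm_num : (5:ℕ) ∣ 210),
        Nat.mod_mod_of_dvd n (by norm_num : (7:ℕ) ∣ 210)]
    have hsub : H.image (fun n => (n % 2, n % 3, n % 5, n % 7)) ⊆
        (H.image (fun n => n % 2)) ×ˢ ((H.image (fun n => n % 3)) ×ˢ
          ((H.image (fun n => n % 5)) ×ˢ (H.image (fun n => n % 7)))) := by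
      intro x hx
      simp only [Finset.mem_image] at hx
      obtain ⟨n, hn, rfl⟩ := hx
      simp only [Finset.mem_product, Finset.mem_image]
      exact ⟨⟨n, hn, rfl⟩, ⟨n, hn, rfl⟩, ⟨n, hn, rfl⟩, ⟨n, hn, rfl⟩⟩
    calc T.card = _ := h1
      _ ≤ ((H.image (fun n => n % 2)) ×ˢ ((H.image (fun n => n % 3)) ×ˢ
          ((H.image (fun n => n % 5)) ×ˢ (H.image (fun n => n % 7))))).card := by
        rw [himg]; exact Finset.card_le_card hsub
      _ ≤ 48 := by
        simp only [Finset.card_product]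
        have b2 : (H.image (fun n => n % 2)).card ≤ 1 := by omega
        have b3 : (H.image (fun n => n % 3)).card ≤ 2 := by omega
        have b5 : (H.image (fun n => n % 5)).card ≤ 4 := by omega
        have b7 : (H.image (fun n => n % 7)).card ≤ 6 := by omega
        calc (H.image (fun n => n % 2)).card * ((H.image (fun n => n % 3)).card *
              ((H.image (fun n => n % 5)).card * (H.image (fun n => n % 7)).card))
            ≤ 1 * (2 * (4 * 6)) := by
              exact Nat.mul_le_mul b2 (Nat.mul_le_mul b3 (Nat.mul_le_mul b5 b7))
          _ = 48 := by norm_num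
  -- fiberwise decomposition
  have hsum : H.card = ∑ r ∈ T, (H.filter (fun n => n % 210 = r)).card := by
    apply Finset.card_eq_sum_card_fiberwise
    intro x hx
    exact Finset.mem_image_of_mem _ hx
  have hfiber : ∀ r ∈ T, (H.filter (fun n => n % 210 = r)).card ≤ 20 := by
    intro r hr
    set F := H.filter (fun n => n % 210 = r) with hF
    rcases F.eq_empty_or_nonempty with he | hFne
    · simp [he]
    have := hFne
    set a := F.min' hFne with ha
    have haF : a ∈ F := F.min'_mem hFne
    have haH : a ∈ H := (Finset.mem_filter.1 haF).1
    have har : a % 210 = r := (Finset.mem_filter.1 haF).2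
    have key : ∀ x ∈ F, x - a ≤ 4164 ∧ a ≤ x ∧ 210 ∣ (x - a) := by
      intro x hx
      have hxH : x ∈ H := (Finset.mem_filter.1 hx).1
      have hxr : x % 210 = r := (Finset.mem_filter.1 hx).2
      have hax : a ≤ x := F.min'_le x hx
      have hxmax : x ≤ H.max' hne := H.le_max' x hxH
      have hamin : H.min' hne ≤ a := H.min'_le a haH
      refine ⟨by omega, hax, ?_⟩
      have : x % 210 = a % 210 := by rw [hxr, har]
      exact (Nat.modEq_iff_dvd' hax).1 this.symm
    have hinj : Set.InjOn (fun x => (x - a) / 210) F := by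
      intro x hx y hy hxy
      obtain ⟨_, hax, hdx⟩ := key x hx
      obtain ⟨_, hay, hdy⟩ := key y hy
      have ex : x - a = 210 * ((x - a) / 210) := (Nat.div_mul_cancel hdx).symm.trans (Nat.mul_comm _ _)
      have ey : y - a = 210 * ((y - a) / 210) := (Nat.div_mul_cancel hdy).symm.trans (Nat.mul_comm _ _)
      simp only at hxy
      omega
    have hmaps : ∀ x ∈ F, (fun x => (x - a) / 210) x ∈ Finset.range 20 := by
      intro x hx
      obtain ⟨hle, _, _⟩ := key x hx
      simp only [Finset.mem_range]
      omega
    calc F.card ≤ (Finset.range 20).card := Finset.card_le_card_of_injOn _ hmaps hinj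
      _ = 20 := by simp
  have : H.card ≤ 48 * 20 := by
    rw [hsum]
    calc ∑ r ∈ T, (H.filter (fun n => n % 210 = r)).card ≤ ∑ _r ∈ T, 20 :=
        Finset.sum_le_sum hfiber
      _ = T.card * 20 := by simp [Finset.sum_const, Nat.smul_one_eq_cast]
      _ ≤ 48 * 20 := Nat.mul_le_mul_right _ hTcard
  omega
end

section
/- Every admissible set of natural numbers with cardinality 10,000 has diameter (maximum element minus minimum element) at least 45,815. -/
set_option maxHeartbeats 2000000 in
theorem admissible_diameter_lower_bound_10000 (H : Finset ℕ) (hne : H.Nonempty)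
    (hcard : H.card = 10000) (hH : IsAdmissible H) :
    45815 ≤ H.max' hne - H.min' hne := by
  by_contra hlt
  push_neg at hlt
  set m := H.min' hne with hm
  have hD : ∀ n ∈ H, n - m ≤ 45814 := by
    intro n hn
    have h1 : n ≤ H.max' hne := H.le_max' n hn
    have h2 : m ≤ n := H.min'_le n hn
    omega
  set f : ℕ → ℕ × ℕ × ℕ × ℕ × ℕ × ℕ :=
    fun n => (n % 2, n % 3, n % 5, n % 7, n % 11, (n - m) / 2310) with hf
  have hinj : Set.InjOn f H := by
    intro a ha b hb hab
    have hma : m ≤ a := H.min'_le a ha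
    have hmb : m ≤ b := H.min'_le b hb
    simp only [hf, Prod.mk.injEq] at hab
    obtain ⟨e2, e3, e5, e7, e11, eq⟩ := hab
    have h6 : a ≡ b [MOD 2 * 3] :=
      (Nat.modEq_and_modEq_iff_modEq_mul (show Nat.Coprime 2 3 by norm_num)).mp ⟨e2, e3⟩
    have h30 : a ≡ b [MOD 2 * 3 * 5] :=
      (Nat.modEq_and_modEq_iff_modEq_mul (show Nat.Coprime (2 * 3) 5 by norm_num)).mp ⟨h6, e5⟩
    have h210 : a ≡ b [MOD 2 * 3 * 5 * 7] :=
      (Nat.modEq_and_modEq_iff_modEq_mul (show Nat.Coprime (2 * 3 * 5) 7 by norm_num)).mp ⟨h30, e7⟩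
    have h2310 : a ≡ b [MOD 2 * 3 * 5 * 7 * 11] :=
      (Nat.modEq_and_modEq_iff_modEq_mul (show Nat.Coprime (2 * 3 * 5 * 7) 11 by norm_num)).mp ⟨h210, e11⟩
    have hmod : a % 2310 = b % 2310 := by
      have h := h2310
      unfold Nat.ModEq at h
      norm_num at h
      exact h
    clear e2 e3 e5 e7 e11 h6 h30 h210 h2310 hf hH hcard hlt
    omega
  have hsub : H.image f ⊆
      (H.image (fun n => n % 2)) ×ˢ (H.image (fun n => n % 3)) ×ˢ
      (H.image (fun n => n % 5)) ×ˢ (H.image (fun n => n % 7)) ×ˢ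
      (H.image (fun n => n % 11)) ×ˢ Finset.range 20 := by
    intro x hx
    simp only [Finset.mem_image] at hx
    obtain ⟨n, hn, rfl⟩ := hx
    simp only [Finset.mem_product, Finset.mem_image, Finset.mem_range, hf]
    refine ⟨⟨n, hn, rfl⟩, ⟨n, hn, rfl⟩, ⟨n, hn, rfl⟩, ⟨n, hn, rfl⟩, ⟨n, hn, rfl⟩, ?_⟩
    have := hD n hn
    omega
  have hc2 := hH 2 (by norm_num)
  have hc3 := hH 3 (by norm_num)
  have hc5 := hH 5 (by norm_num)
  have hc7 := hH 7 (by norm_num)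
  have hc11 := hH 11 (by norm_num)
  have hcard' : H.card ≤ 9600 := by
    calc H.card = (H.image f).card := (Finset.card_image_of_injOn hinj).symm
    _ ≤ _ := Finset.card_le_card hsub
    _ ≤ 9600 := by
        simp only [Finset.card_product, Finset.card_range]
        calc (H.image (fun n => n % 2)).card * ((H.image (fun n => n % 3)).card *
              ((H.image (fun n => n % 5)).card * ((H.image (fun n => n % 7)).card *
              ((H.image (fun n => n % 11)).card * 20))))
            ≤ 1 * (2 * (4 * (6 * (10 * 20)))) := by gcongr <;> omega
          _ = 9600 := by norm_num
  omega
end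

section
/- Every admissible set of natural numbers with cardinality 65 has diameter (maximum element minus minimum element) at least 189. -/
theorem admissible_diameter_lower_bound_65 (H : Finset ℕ) (hne : H.Nonempty)
    (hcard : H.card = 65) (hH : IsAdmissible H) :
    189 ≤ H.max' hne - H.min' hne := by
  set m := H.min' hne with hm
  set M := H.max' hne with hM
  have h2 : (H.image (fun n => n % 2)).card < 2 := hH 2 Nat.prime_two
  have h3 : (H.image (fun n => n % 3)).card < 3 := hH 3 Nat.prime_three
  -- the image mod 6 has at most 2 elements
  have h6 : (H.image (fun n => n % 6)).card ≤ 2 := by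
    have hmaps : ∀ r ∈ H.image (fun n => n % 6),
        (r % 2, r % 3) ∈ (H.image (fun n => n % 2)) ×ˢ (H.image (fun n => n % 3)) := by
      intro r hr
      simp only [Finset.mem_image] at hr
      obtain ⟨x, hx, rfl⟩ := hr
      simp only [Finset.mem_product, Finset.mem_image]
      exact ⟨⟨x, hx, by omega⟩, ⟨x, hx, by omega⟩⟩
    have hinj : Set.InjOn (fun r => (r % 2, r % 3))
        ((H.image (fun n => n % 6)) : Set ℕ) := by
      intro a ha b hb hab
      simp only [Finset.coe_image, Set.mem_image] at ha hb
      obtain ⟨x, -, rfl⟩ := ha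
      obtain ⟨y, -, rfl⟩ := hb
      simp only [Prod.mk.injEq] at hab
      omega
    calc (H.image (fun n => n % 6)).card
        ≤ ((H.image (fun n => n % 2)) ×ˢ (H.image (fun n => n % 3))).card :=
          Finset.card_le_card_of_injOn _ hmaps hinj
      _ = (H.image (fun n => n % 2)).card * (H.image (fun n => n % 3)).card :=
          Finset.card_product _ _
      _ ≤ 1 * 2 := Nat.mul_le_mul (by omega) (by omega)
      _ = 2 := rfl
  by_contra hcon
  push_neg at hcon
  set q := (M - m) / 6 with hq
  have hq31 : q ≤ 31 := by omega
  -- H injects into (image mod 6) × range (q+1)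
  have hmaps2 : ∀ n ∈ H, (n % 6, (n - m) / 6) ∈
      (H.image (fun n => n % 6)) ×ˢ Finset.range (q + 1) := by
    intro n hn
    have hmn : m ≤ n := H.min'_le n hn
    have hnM : n ≤ M := H.le_max' n hn
    simp only [Finset.mem_product, Finset.mem_image, Finset.mem_range]
    refine ⟨⟨n, hn, rfl⟩, ?_⟩
    have : (n - m) / 6 ≤ (M - m) / 6 := Nat.div_le_div_right (by omega)
    omega
  have hinj2 : Set.InjOn (fun n => (n % 6, (n - m) / 6)) (H : Set ℕ) := by
    intro a ha b hb hab
    have hma : m ≤ a := H.min'_le a ha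
    have hmb : m ≤ b := H.min'_le b hb
    simp only [Prod.mk.injEq] at hab
    omega
  have hcount : H.card ≤ ((H.image (fun n => n % 6)) ×ˢ Finset.range (q + 1)).card :=
    Finset.card_le_card_of_injOn _ hmaps2 hinj2
  rw [Finset.card_product, Finset.card_range, hcard] at hcount
  have : (H.image (fun n => n % 6)).card * (q + 1) ≤ 2 * (q + 1) :=
    Nat.mul_le_mul_right _ h6
  omega
end
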